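/- arXiv:1204.2304 — 3 statements merged into one kernel-verified Lean document; each statement's English description precedes it below -/
import Mathlib

section
/- If X_0, X_1, ... are i.i.d. real random variables with distribution function F, and (u_n) is a sequence of real numbers such that n·P(X_0 > u_n) → τ for some τ ≥ 0, then P(max{X_0,...,X_{n-1}} ≤ u_n) → e^{−τ} as n → ∞. -/
/-!
By independence and identical distribution, `P(M_n ≤ u_n) = (1 - p_n)^n` with
`p_n = P(X_0 > u_n)`, and `(1 - p_n)^n → e^{-τ}` as soon as `n p_n → τ`.
-/

open MeasureTheory Filter ProbabilityTheory

namespace ProbabilityTheory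

variable {Ω ι β : Type*} [MeasurableSpace Ω] {μ : Measure Ω} [MeasurableSpace β]

theorem iIndepFun.measure_biInter_preimage_eq_pow {X : ι → Ω → β} (hX : iIndepFun X μ) {j : ι}
    (hident : ∀ i, IdentDistrib (X i) (X j) μ μ) {S : Set β} (hS : MeasurableSet S)
    (s : Finset ι) : μ (⋂ i ∈ s, X i ⁻¹' S) = μ (X j ⁻¹' S) ^ s.card := by
  rw [hX.meas_biInter fun i _ => ⟨S, hS, rfl⟩, ← Finset.prod_const]
  exact Finset.prod_congr rfl fun i _ => (hident i).measure_mem_eq hS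

end ProbabilityTheory

theorem iid_max_evl_general {Ω : Type*} [MeasurableSpace Ω] (μpr : Measure Ω) [IsProbabilityMeasure μpr]
    (X : ℕ → Ω → ℝ)
    (hindep : iIndepFun X μpr)
    (hident : ∀ i, IdentDistrib (X i) (X 0) μpr μpr)
    (u : ℕ → ℝ) (τ : ℝ)
    (hu : Tendsto (fun n : ℕ => (n : ℝ) * (μpr {ω | X 0 ω > u n}).toReal) atTop (nhds τ)) :
    Tendsto (fun n => (μpr {ω | ∀ i < n, X i ω ≤ u n}).toReal) atTop
      (nhds (Real.exp (-τ))) := by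
  have hmax_eq_pow (n : ℕ) : μpr {ω | ∀ i < n, X i ω ≤ u n}
      = μpr (X 0 ⁻¹' Set.Iic (u n)) ^ n := by
    convert hindep.measure_biInter_preimage_eq_pow hident measurableSet_Iic (Finset.range n)
      using 2 <;> simp [Set.ext_iff]
  have hcdf_eq (c : ℝ) :
      (μpr (X 0 ⁻¹' Set.Iic c)).toReal = 1 + -(μpr {ω | X 0 ω > c}).toReal := by
    have hnull :=
      (hident 0).aemeasurable_fst.nullMeasurableSet_preimage (measurableSet_Iic (a := c))
    have htail : {ω | X 0 ω > c} = (X 0 ⁻¹' Set.Iic c)ᶜ := by ext; simp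
    rw [htail, ← measureReal_def, ← measureReal_def, probReal_compl_eq_one_sub₀ hnull]
    ring
  simp only [hmax_eq_pow, ENNReal.toReal_pow, hcdf_eq]
  exact Real.tendsto_one_add_pow_exp_of_tendsto (by simpa only [mul_neg] using hu.neg)

theorem iid_max_evl {Ω : Type*} [MeasurableSpace Ω] (μpr : Measure Ω) [IsProbabilityMeasure μpr]
    (X : ℕ → Ω → ℝ) (hmeas : ∀ i, Measurable (X i))
    (hindep : iIndepFun X μpr)
    (hident : ∀ i, IdentDistrib (X i) (X 0) μpr μpr)
    (u : ℕ → ℝ) (τ : ℝ) (hτ : 0 ≤ τ)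
    (hu : Tendsto (fun n : ℕ => (n : ℝ) * (μpr {ω | X 0 ω > u n}).toReal) atTop (nhds τ)) :
    Tendsto (fun n => (μpr {ω | ∀ i < n, X i ω ≤ u n}).toReal) atTop
      (nhds (Real.exp (-τ))) :=
  iid_max_evl_general μpr X hindep hident u τ hu
end

section
/- Let X_0, X_1, ... be a stationary stochastic process, u a real threshold, p a positive integer, and for κ, i ∈ ℕ₀ define U^{(κ)}(u) by U^{(0)}(u) = {X_0 > u} and U^{(κ)}(u) = f^{−p}(U^{(κ−1)}(u)) ∩ U^{(0)}(u) (equivalently the event {X_0 > u, X_p > u, ..., X_{κp} > u}); define Q_{p,i}^κ(u) = {X_i > u, X_{i+p} > u, ..., X_{i+κp} > u, X_{i+(κ+1)p} ≤ u}, the no-annulus-entrance event 𝒬_{p,0,s}^κ(u) = ∩_{i=0}^{s−1} (Q_{p,i}^κ(u))^c, and the no-ball-entrance event ℋ_{p,0,s}^κ(u) = ∩_{i=0}^{s−1} f^{−i}((U^{(κ)}(u))^c). Then for any s, κ, |P(ℋ_{p,0,s}^κ(u)) − P(𝒬_{p,0,s}^κ(u))| ≤ p · ∑_{i=κ+1}^∞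 P(U^{(i)}(u)). -/
open MeasureTheory Finset

theorem no_ball_entrance_vs_no_annulus_entrance {Ω : Type*} [MeasurableSpace Ω]
    (ℙ : Measure Ω) [IsProbabilityMeasure ℙ]
    (f : Ω → Ω) (hf : MeasurePreserving f ℙ ℙ) (φ : Ω → ℝ) (hφ : Measurable φ)
    (u : ℝ) (p : ℕ) (hp : 0 < p) (s κ : ℕ)
    (X : ℕ → Ω → ℝ) (hX : ∀ n, X n = φ ∘ f^[n])
    (U : ℕ → Set Ω) (hU : ∀ k, U k = {ω | ∀ j ≤ k, u < X (j * p) ω})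
    (Q : ℕ → ℕ → Set Ω)
    (hQ : ∀ i k, Q i k =
      {ω | (∀ j ≤ k, u < X (i + j * p) ω) ∧ X (i + (k + 1) * p) ω ≤ u})
    (hsum : Summable fun i : ℕ => (ℙ (U (κ + 1 + i))).toReal) :
    |(ℙ (⋂ i ∈ Finset.range s, (f^[i] ⁻¹' U κ)ᶜ)).toReal -
        (ℙ (⋂ i ∈ Finset.range s, (Q i κ)ᶜ)).toReal| ≤
      p * ∑' i : ℕ, (ℙ (U (κ + 1 + i))).toReal := by
  have hfm : Measurable f := hf.measurable
  have hXm : ∀ n, Measurable (X n) := fun n => by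
    rw [hX]; exact hφ.comp (hfm.iterate n)
  have hUm : ∀ k, MeasurableSet (U k) := fun k => by
    rw [hU]
    have : {ω | ∀ j ≤ k, u < X (j * p) ω} = ⋂ j ∈ Set.Iic k, {ω | u < X (j * p) ω} := by
      ext ω; simp
    rw [this]
    exact MeasurableSet.biInter (Set.to_countable _)
      (fun j _ => measurableSet_lt measurable_const (hXm _))
  -- membership description of preimages of U
  have hA : ∀ (i k : ℕ) (ω : Ω), ω ∈ f^[i] ⁻¹' U k ↔ ∀ j ≤ k, u < X (i + j * p) ω := by
    intro i k ω
    simp only [Set.mem_preimage, hU, Set.mem_setOf_eq, hX, Function.comp_apply]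
    constructor <;> intro h j hj <;>
      [ (have := h j hj;
         rwa [← Function.iterate_add_apply, add_comm (j*p) i] at this);
        (have := h j hj;
         rwa [← Function.iterate_add_apply, add_comm (j*p) i])]
  set a : ℕ → ℝ := fun m => (ℙ (U (κ + 1 + m))).toReal with ha
  have ha_nonneg : ∀ m, 0 ≤ a m := fun m => ENNReal.toReal_nonneg
  set H : Set Ω := ⋂ i ∈ Finset.range s, (f^[i] ⁻¹' U κ)ᶜ with hH
  set G : Set Ω := ⋂ i ∈ Finset.range s, (Q i κ)ᶜ with hG
  -- H ⊆ G
  have hQsub : ∀ i, Q i κ ⊆ f^[i] ⁻¹' U κ := by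
    intro i ω hω
    rw [hQ] at hω
    exact (hA i κ ω).2 hω.1
  have hHG : H ⊆ G :=
    Set.iInter₂_mono fun i _ => Set.compl_subset_compl.mpr (hQsub i)
  -- the main combinatorial inclusion
  have hincl : G \ H ⊆ ⋃ i ∈ Finset.range s, f^[i] ⁻¹' U (κ + ((s - 1 - i) / p + 1)) := by
    rintro ω ⟨hωG, hωH⟩
    simp only [hG, Set.mem_iInter, Set.mem_compl_iff, Finset.mem_range] at hωG
    simp only [hH, Set.mem_iInter, Set.mem_compl_iff, Finset.mem_range, not_forall,
      not_not] at hωH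
    obtain ⟨i, his, hωA⟩ := hωH
    -- step lemma
    have step : ∀ (i m : ℕ), i + m * p < s →
        (∀ j ≤ κ + m, u < X (i + j * p) ω) → ∀ j ≤ κ + m + 1, u < X (i + j * p) ω := by
      intro i m hlt h j hj
      rcases Nat.lt_or_ge j (κ + m + 1) with hj' | hj'
      · exact h j (Nat.lt_succ_iff.mp hj')
      · have hje : j = κ + m + 1 := le_antisymm hj hj'
        subst hje
        have hQω := hωG (i + m * p) hlt
        rw [hQ] at hQω
        simp only [Set.mem_setOf_eq, not_and, not_le] at hQω
        have h1 : ∀ j ≤ κ, u < X (i + m * p + j * p) ω := by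
          intro j' hjκ
          have := h (j' + m) (by omega)
          have e : i + (j' + m) * p = i + m * p + j' * p := by ring
          rwa [e] at this
        have h2 := hQω h1
        have e : i + m * p + (κ + 1) * p = i + (κ + m + 1) * p := by ring
        rwa [e] at h2
    have iter : ∀ (m i : ℕ), (∀ j ≤ κ, u < X (i + j * p) ω) →
        (∀ m' < m, i + m' * p < s) → ∀ j ≤ κ + m, u < X (i + j * p) ω := by
      intro m
      induction m with
      | zero => intro i h _; simpa using h
      | succ m ih =>
        intro i h hlt
        exact step i m (hlt m (Nat.lt_succ_self m))
          (ih i h fun m' hm' => hlt m' (hm'.trans (Nat.lt_succ_self m)))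
    refine Set.mem_biUnion (Finset.mem_range.mpr his) ?_
    rw [hA]
    refine iter ((s - 1 - i) / p + 1) i ((hA i κ ω).1 hωA) ?_
    intro m' hm'
    have hm'' : m' ≤ (s - 1 - i) / p := Nat.lt_succ_iff.mp hm'
    have : m' * p ≤ s - 1 - i := by
      have := Nat.mul_le_mul_right p hm''
      calc m' * p ≤ (s - 1 - i) / p * p := this
        _ ≤ s - 1 - i := Nat.div_mul_le_self _ _
    omega
  -- measure estimates
  have hUmeas : ∀ (i k : ℕ), ℙ (f^[i] ⁻¹' U k) = ℙ (U k) := fun i k =>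
    (hf.iterate i).measure_preimage (hUm k).nullMeasurableSet
  have hGH_meas : (ℙ (G \ H)).toReal ≤ ∑ i ∈ Finset.range s, a ((s - 1 - i) / p) := by
    have h1 : ℙ (G \ H) ≤ ∑ i ∈ Finset.range s, ℙ (U (κ + 1 + (s - 1 - i) / p)) := by
      calc ℙ (G \ H) ≤ ℙ (⋃ i ∈ Finset.range s, f^[i] ⁻¹' U (κ + ((s - 1 - i) / p + 1))) :=
            measure_mono hincl
        _ ≤ ∑ i ∈ Finset.range s, ℙ (f^[i] ⁻¹' U (κ + ((s - 1 - i) / p + 1))) :=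
            measure_biUnion_finset_le _ _
        _ = ∑ i ∈ Finset.range s, ℙ (U (κ + 1 + (s - 1 - i) / p)) := by
            refine Finset.sum_congr rfl fun i _ => ?_
            rw [hUmeas]
            congr 1
            ring_nf
    calc (ℙ (G \ H)).toReal ≤
        (∑ i ∈ Finset.range s, ℙ (U (κ + 1 + (s - 1 - i) / p))).toReal :=
          ENNReal.toReal_mono (by
            refine (ENNReal.sum_lt_top.mpr fun i _ => measure_lt_top _ _).ne) h1
      _ = ∑ i ∈ Finset.range s, a ((s - 1 - i) / p) := by
          rw [ENNReal.toReal_sum (fun i _ => measure_ne_top _ _)]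
  -- regroup the sum
  have hreflect : ∑ i ∈ Finset.range s, a ((s - 1 - i) / p) =
      ∑ t ∈ Finset.range s, a (t / p) := by
    exact Finset.sum_range_reflect (fun t => a (t / p)) s
  have hgrp : ∀ T, ∑ t ∈ Finset.range (p * T), a (t / p) = ∑ q ∈ Finset.range T, p * a q := by
    intro T
    induction T with
    | zero => simp
    | succ T ih =>
      rw [Finset.sum_range_succ, ← ih, Nat.mul_succ]
      rw [Finset.range_eq_Ico, ← Finset.sum_Ico_consecutive _ (Nat.zero_le (p * T))
        (by omega : p * T ≤ p * T + p), ← Finset.range_eq_Ico]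
      congr 1
      have : ∀ t ∈ Finset.Ico (p * T) (p * T + p), a (t / p) = a T := by
        intro t ht
        simp only [Finset.mem_Ico] at ht
        congr 1
        exact Nat.div_eq_of_lt_le (by rw [mul_comm]; omega) (by rw [add_mul, one_mul, mul_comm T p]; omega)
      rw [Finset.sum_congr rfl this, Finset.sum_const, Nat.card_Ico]
      simp [mul_comm]
  have hsum_le : ∑ t ∈ Finset.range s, a (t / p) ≤ p * ∑' i, a i := by
    have h1 : ∑ t ∈ Finset.range s, a (t / p) ≤ ∑ t ∈ Finset.range (p * s), a (t / p) := by
      refine Finset.sum_le_sum_of_subset_of_nonneg ?_ (fun t _ _ => ha_nonneg _)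
      exact Finset.range_subset_range.mpr (by nlinarith)
    rw [hgrp s, ← Finset.mul_sum] at h1
    calc ∑ t ∈ Finset.range s, a (t / p) ≤ (p : ℝ) * ∑ q ∈ Finset.range s, a q := h1
      _ ≤ p * ∑' i, a i := by
          refine mul_le_mul_of_nonneg_left ?_ (by positivity)
          exact Summable.sum_le_tsum _ (fun q _ => ha_nonneg _) hsum
  -- put everything together
  have hPH_le : ℙ H ≤ ℙ G := measure_mono hHG
  have hPG_le : ℙ G ≤ ℙ H + ℙ (G \ H) := by
    calc ℙ G ≤ ℙ (H ∪ (G \ H)) := measure_mono (by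
          intro ω hω
          by_cases h : ω ∈ H
          · exact Or.inl h
          · exact Or.inr ⟨hω, h⟩)
      _ ≤ ℙ H + ℙ (G \ H) := measure_union_le _ _
  have habs : |(ℙ H).toReal - (ℙ G).toReal| = (ℙ G).toReal - (ℙ H).toReal := by
    rw [abs_sub_comm, abs_of_nonneg]
    exact sub_nonneg.mpr (ENNReal.toReal_mono (measure_ne_top _ _) hPH_le)
  rw [habs]
  have h2 : (ℙ G).toReal ≤ (ℙ H).toReal + (ℙ (G \ H)).toReal := by
    calc (ℙ G).toReal ≤ (ℙ H + ℙ (G \ H)).toReal :=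
        ENNReal.toReal_mono (by
          exact ENNReal.add_ne_top.mpr ⟨measure_ne_top _ _, measure_ne_top _ _⟩) hPG_le
      _ = (ℙ H).toReal + (ℙ (G \ H)).toReal :=
        ENNReal.toReal_add (measure_ne_top _ _) (measure_ne_top _ _)
  have := hGH_meas.trans (hreflect.trans_le hsum_le)
  linarith
end

section
/- Let (𝒳, 𝓑, ℙ, f) be a measure-preserving system with decay of correlations against L¹: there exist a Banach space 𝒞 of observables and C > 0 such that for all φ ∈ 𝒞 and ψ ∈ L¹(ℙ), |∫φ·(ψ∘f^n)dℙ − ∫φdℙ·∫ψdℙ| ≤ C‖φ‖_𝒞 ‖ψ‖₁ n^{−2}. Suppose A_n, B_n are measurable sets with 1_{A_n} ∈ 𝒞, ‖1_{A_n}‖_𝒞 ≤ C′, and suppose α_n → ∞ and (k_n) satisfy k_n → ∞, and n²/k_n · ℙ(B_n)ℙ(A_n) → 0 and n·ℙ(B_n)·∑_{j ≥ α_n} j^{−2} → 0, and ℙ(A_n ∩ f^{−j}B_n) = 0 for j < α_n. Then n·∑_{j=1}^{⌊n/k_n⌋} ℙ(A_n ∩ f^{−j} B_n) → 0. -/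
/-!
With `φ = 1_{A_n}` and `ψ = 1_{B_n}` the decay estimate gives
`ℙ(A_n ∩ f^{-j} B_n) ≤ ℙ(A_n) ℙ(B_n) + C C' ℙ(B_n) j⁻²` for `j ≥ 1`. The terms with `j < α_n`
vanish, so the sum over `1 ≤ j ≤ n / k_n` is at most
`(n / k_n) ℙ(A_n) ℙ(B_n) + C C' ℙ(B_n) ∑_{j ≥ α_n} j⁻²`; multiplied by `n`, both parts tend to `0`
by hypothesis.
-/

open MeasureTheory Filter Finset

def DecaysAgainstL1 {Ω : Type*} [MeasurableSpace Ω] (μ : Measure Ω) (f : Ω → Ω)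
    (𝒞 : Set (Ω → ℝ)) (normC : (Ω → ℝ) → ℝ) (C : ℝ) : Prop :=
  ∀ φ ∈ 𝒞, ∀ ψ : Ω → ℝ, Integrable ψ μ → ∀ n : ℕ, 0 < n →
    |(∫ ω, φ ω * ψ (f^[n] ω) ∂μ) - (∫ ω, φ ω ∂μ) * ∫ ω, ψ ω ∂μ| ≤
      C * normC φ * (∫ ω, |ψ ω| ∂μ) * ((n : ℝ) ^ 2)⁻¹

section Correlation

variable {Ω : Type*} [MeasurableSpace Ω] {μ : Measure Ω} {s t : Set Ω}

theorem integral_indicator_one_mul_indicator_one_comp {g : Ω → Ω} (hg : Measurable g)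
    (hs : MeasurableSet s) (ht : MeasurableSet t) :
    ∫ ω, s.indicator (fun _ => (1 : ℝ)) ω * t.indicator (fun _ => (1 : ℝ)) (g ω) ∂μ =
      μ.real (s ∩ g ⁻¹' t) := by
  rw [← integral_indicator_one (hs.inter (hg ht)), Set.inter_indicator_one]
  rfl

theorem integral_abs_indicator_one (ht : MeasurableSet t) :
    ∫ ω, |t.indicator (fun _ => (1 : ℝ)) ω| ∂μ = μ.real t := by
  simp [← Real.norm_eq_abs, norm_indicator_eq_indicator_norm, integral_indicator_const, ht]

theorem DecaysAgainstL1.measureReal_inter_preimage_iterate_le [IsFiniteMeasure μ]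
    {f : Ω → Ω} {𝒞 : Set (Ω → ℝ)} {normC : (Ω → ℝ) → ℝ} {C : ℝ}
    (hdc : DecaysAgainstL1 μ f 𝒞 normC C) (hf : Measurable f)
    (hs : MeasurableSet s) (ht : MeasurableSet t) (hs𝒞 : s.indicator (fun _ => (1 : ℝ)) ∈ 𝒞)
    {j : ℕ} (hj : 0 < j) :
    μ.real (s ∩ f^[j] ⁻¹' t) ≤
      μ.real s * μ.real t + C * normC (s.indicator fun _ => 1) * μ.real t * ((j : ℝ) ^ 2)⁻¹ := by
  have h := hdc _ hs𝒞 _ ((integrable_const (1 : ℝ)).indicator ht) j hj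
  rw [integral_indicator_one_mul_indicator_one_comp (hf.iterate j) hs ht,
    integral_abs_indicator_one ht, integral_indicator_const _ hs, integral_indicator_const _ ht,
    smul_eq_mul, smul_eq_mul, mul_one, mul_one] at h
  linarith [(abs_le.mp h).2]

end Correlation

theorem sum_le_tsum_nat_add {a : ℕ} {g : ℕ → ℝ} (hg : 0 ≤ g) (hsum : Summable fun i => g (a + i))
    {F : Finset ℕ} (hF : ∀ j ∈ F, a ≤ j) :
    ∑ j ∈ F, g j ≤ ∑' i, g (a + i) :=
  calc ∑ j ∈ F, g j = ∑ i ∈ F.image (· - a), g (a + i) := by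
        rw [sum_image fun i hi j hj hij => by have := hF i hi; have := hF j hj; omega]
        exact sum_congr rfl fun j hj => by rw [Nat.add_sub_cancel' (hF j hj)]
    _ ≤ ∑' i, g (a + i) := hsum.sum_le_tsum _ fun i _ => hg _

theorem summable_inv_sq_nat_add (a : ℕ) : Summable fun i : ℕ => (((a + i : ℕ) : ℝ) ^ 2)⁻¹ := by
  simpa only [add_comm a] using
    (summable_nat_add_iff a).mpr (Real.summable_nat_pow_inv.mpr one_lt_two)

theorem sum_Icc_le_of_eq_zero_of_le_add_inv_sq {x : ℕ → ℝ} {a m : ℕ} {p c : ℝ}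
    (hp : 0 ≤ p) (hc : 0 ≤ c) (hzero : ∀ j < a, x j = 0)
    (hle : ∀ j, 0 < j → x j ≤ p + c * ((j : ℝ) ^ 2)⁻¹) :
    ∑ j ∈ Icc 1 m, x j ≤ m * p + c * ∑' i : ℕ, (((a + i : ℕ) : ℝ) ^ 2)⁻¹ := by
  set F := {j ∈ Icc 1 m | a ≤ j}
  have hcard : (#F : ℝ) ≤ m := by
    exact_mod_cast (card_filter_le _ _).trans_eq (Nat.card_Icc 1 m)
  have htail : ∑ j ∈ F, ((j : ℝ) ^ 2)⁻¹ ≤ ∑' i : ℕ, (((a + i : ℕ) : ℝ) ^ 2)⁻¹ :=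
    sum_le_tsum_nat_add (g := fun j : ℕ => ((j : ℝ) ^ 2)⁻¹) (fun j => by positivity)
      (summable_inv_sq_nat_add a) fun j hj => (mem_filter.mp hj).2
  calc ∑ j ∈ Icc 1 m, x j = ∑ j ∈ F, x j :=
        (sum_filter_of_ne fun j _ hj => not_lt.mp (mt (hzero j) hj)).symm
    _ ≤ ∑ j ∈ F, (p + c * ((j : ℝ) ^ 2)⁻¹) :=
        sum_le_sum fun j hj => hle j (mem_Icc.mp (mem_filter.mp hj).1).1
    _ = #F * p + c * ∑ j ∈ F, ((j : ℝ) ^ 2)⁻¹ := by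
        rw [sum_add_distrib, sum_const, nsmul_eq_mul, mul_sum]
    _ ≤ m * p + c * ∑' i : ℕ, (((a + i : ℕ) : ℝ) ^ 2)⁻¹ := by gcongr

theorem Dp_prime_from_L1_decay_general {Ω : Type*} [MeasurableSpace Ω]
    (ℙ : Measure Ω) [IsProbabilityMeasure ℙ]
    (f : Ω → Ω) (hf : MeasurePreserving f ℙ ℙ)
    (𝒞 : Set (Ω → ℝ)) (normC : (Ω → ℝ) → ℝ) (C C' : ℝ) (hC : 0 < C) (hC' : 0 < C')
    (hdc : ∀ φ ∈ 𝒞, ∀ ψ : Ω → ℝ, Integrable ψ ℙ → ∀ n : ℕ, 0 < n →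
      |(∫ ω, φ ω * ψ (f^[n] ω) ∂ℙ) - (∫ ω, φ ω ∂ℙ) * ∫ ω, ψ ω ∂ℙ| ≤
        C * normC φ * (∫ ω, |ψ ω| ∂ℙ) * ((n : ℝ) ^ 2)⁻¹)
    (A B : ℕ → Set Ω) (hA : ∀ n, MeasurableSet (A n)) (hB : ∀ n, MeasurableSet (B n))
    (hmem : ∀ n, (A n).indicator (fun _ => (1 : ℝ)) ∈ 𝒞)
    (hnorm : ∀ n, normC ((A n).indicator fun _ => (1 : ℝ)) ≤ C')
    (α k : ℕ → ℕ)
    (h1 : Tendsto (fun n : ℕ => (n : ℝ) ^ 2 / (k n) * (ℙ (B n)).toReal * (ℙ (A n)).toReal)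
      atTop (nhds 0))
    (h2 : Tendsto (fun n : ℕ => (n : ℝ) * (ℙ (B n)).toReal *
      ∑' j : ℕ, (((α n + j : ℕ) : ℝ) ^ 2)⁻¹) atTop (nhds 0))
    (h3 : ∀ n, ∀ j < α n, ℙ (A n ∩ f^[j] ⁻¹' B n) = 0) :
    Tendsto (fun n : ℕ => (n : ℝ) *
        ∑ j ∈ Finset.Icc 1 (n / k n), (ℙ (A n ∩ f^[j] ⁻¹' B n)).toReal)
      atTop (nhds 0) := by
  set T := fun n => ∑' j : ℕ, (((α n + j : ℕ) : ℝ) ^ 2)⁻¹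
  have hbound : ∀ n : ℕ, (n : ℝ) * ∑ j ∈ Icc 1 (n / k n), ℙ.real (A n ∩ f^[j] ⁻¹' B n) ≤
      (n : ℝ) ^ 2 / (k n) * ℙ.real (B n) * ℙ.real (A n) + C * C' * (n * ℙ.real (B n) * T n) := by
    intro n
    have hsum := sum_Icc_le_of_eq_zero_of_le_add_inv_sq (m := n / k n)
      (p := ℙ.real (A n) * ℙ.real (B n)) (c := C * C' * ℙ.real (B n)) (by positivity)
      (by positivity) (fun j hj => by rw [measureReal_def, h3 n j hj, ENNReal.toReal_zero])
      fun j hj => (DecaysAgainstL1.measureReal_inter_preimage_iterate_le hdc hf.measurable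
        (hA n) (hB n) (hmem n) hj).trans (by gcongr; exact hnorm n)
    have hdiv : ((n / k n : ℕ) : ℝ) ≤ n / k n := Nat.cast_div_le
    calc (n : ℝ) * ∑ j ∈ Icc 1 (n / k n), ℙ.real (A n ∩ f^[j] ⁻¹' B n)
        ≤ n * ((n / k n : ℕ) * (ℙ.real (A n) * ℙ.real (B n)) + C * C' * ℙ.real (B n) * T n) := by
          gcongr
      _ ≤ n * (n / k n * (ℙ.real (A n) * ℙ.real (B n)) + C * C' * ℙ.real (B n) * T n) := by
          gcongr
      _ = (n : ℝ) ^ 2 / (k n) * ℙ.real (B n) * ℙ.real (A n) + C * C' * (n * ℙ.real (B n) * T n) := by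
          ring
  refine squeeze_zero (fun n => by positivity) hbound ?_
  have hlim := h1.add (h2.const_mul (C * C'))
  rw [mul_zero, add_zero] at hlim
  exact hlim

theorem Dp_prime_from_L1_decay {Ω : Type*} [MeasurableSpace Ω]
    (ℙ : Measure Ω) [IsProbabilityMeasure ℙ]
    (f : Ω → Ω) (hf : MeasurePreserving f ℙ ℙ)
    (𝒞 : Set (Ω → ℝ)) (normC : (Ω → ℝ) → ℝ) (C C' : ℝ) (hC : 0 < C) (hC' : 0 < C')
    (hdc : ∀ φ ∈ 𝒞, ∀ ψ : Ω → ℝ, Integrable ψ ℙ → ∀ n : ℕ, 0 < n →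
      |(∫ ω, φ ω * ψ (f^[n] ω) ∂ℙ) - (∫ ω, φ ω ∂ℙ) * ∫ ω, ψ ω ∂ℙ| ≤
        C * normC φ * (∫ ω, |ψ ω| ∂ℙ) * ((n : ℝ) ^ 2)⁻¹)
    (A B : ℕ → Set Ω) (hA : ∀ n, MeasurableSet (A n)) (hB : ∀ n, MeasurableSet (B n))
    (hmem : ∀ n, (A n).indicator (fun _ => (1 : ℝ)) ∈ 𝒞)
    (hnorm : ∀ n, normC ((A n).indicator fun _ => (1 : ℝ)) ≤ C')
    (α k : ℕ → ℕ)
    (hα : Tendsto α atTop atTop) (hk : Tendsto k atTop atTop)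
    (h1 : Tendsto (fun n : ℕ => (n : ℝ) ^ 2 / (k n) * (ℙ (B n)).toReal * (ℙ (A n)).toReal)
      atTop (nhds 0))
    (h2 : Tendsto (fun n : ℕ => (n : ℝ) * (ℙ (B n)).toReal *
      ∑' j : ℕ, (((α n + j : ℕ) : ℝ) ^ 2)⁻¹) atTop (nhds 0))
    (h3 : ∀ n, ∀ j < α n, ℙ (A n ∩ f^[j] ⁻¹' B n) = 0) :
    Tendsto (fun n : ℕ => (n : ℝ) *
        ∑ j ∈ Finset.Icc 1 (n / k n), (ℙ (A n ∩ f^[j] ⁻¹' B n)).toReal)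
      atTop (nhds 0) :=
  Dp_prime_from_L1_decay_general ℙ f hf 𝒞 normC C C' hC hC' hdc A B hA hB hmem hnorm α k h1 h2 h3
end
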